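/- For every integer n ≥ 2 and all smooth compactly supported functions u, τ : ℝⁿ → ℝ, the Einstein–Hilbert action of the Weyl-rescaled metric σ^{−2} g_u (with dilaton σ = e^{τ}) equals the Zumino–Deser Weyl-invariant functional: S(u − τ) = ∫_{ℝⁿ} e^{nu}·e^{(2−n)τ}·( R(u) + (n−1)(n−2)·|∇τ|²_u ) dx. -/

import Mathlib

open MeasureTheory Real

noncomputable section

/-- Coordinate partial derivative `∂ᵢ f x` on `ℝⁿ = EuclideanSpace ℝ (Fin n)`. -/
def pd (n : ℕ) (f : EuclideanSpace ℝ (Fin n) → ℝ) (i : Fin n)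
    (x : EuclideanSpace ℝ (Fin n)) : ℝ :=
  fderiv ℝ f x (EuclideanSpace.single i 1)

/-- Second coordinate partial derivative `∂ᵢ∂ᵢ f x`. -/
def pd2 (n : ℕ) (f : EuclideanSpace ℝ (Fin n) → ℝ) (i : Fin n)
    (x : EuclideanSpace ℝ (Fin n)) : ℝ :=
  pd n (pd n f i) i x

/-- Scalar curvature expression of the conformally flat metric `g_v = e^{2v} δ`:
`R(v) = e^{−2v} ( −2(n−1) Σᵢ ∂ᵢ∂ᵢ v − (n−1)(n−2) Σᵢ (∂ᵢ v)² )`. -/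
def Rscal (n : ℕ) (v : EuclideanSpace ℝ (Fin n) → ℝ)
    (x : EuclideanSpace ℝ (Fin n)) : ℝ :=
  Real.exp (-2 * v x) *
    (-2 * ((n : ℝ) - 1) * ∑ i, pd2 n v i x
      - ((n : ℝ) - 1) * ((n : ℝ) - 2) * ∑ i, (pd n v i x) ^ 2)

/-- Laplacian of `g_v` acting on `f`:
`Δ_v f = −e^{−2v} ( Σᵢ ∂ᵢ∂ᵢ f + (n−2) Σᵢ ∂ᵢ v ∂ᵢ f )`. -/
def lap (n : ℕ) (v f : EuclideanSpace ℝ (Fin n) → ℝ)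
    (x : EuclideanSpace ℝ (Fin n)) : ℝ :=
  -Real.exp (-2 * v x) *
    (∑ i, pd2 n f i x + ((n : ℝ) - 2) * ∑ i, pd n v i x * pd n f i x)

/-- Gradient square `|∇f|²_v = e^{−2v} Σᵢ (∂ᵢ f)²`. -/
def gradSq (n : ℕ) (v f : EuclideanSpace ℝ (Fin n) → ℝ)
    (x : EuclideanSpace ℝ (Fin n)) : ℝ :=
  Real.exp (-2 * v x) * ∑ i, (pd n f i x) ^ 2

/-- Einstein–Hilbert action `S(u) = ∫ e^{nu} R(u) dx`. -/
def SEH (n : ℕ) (u : EuclideanSpace ℝ (Fin n) → ℝ) : ℝ :=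
  ∫ x, Real.exp ((n : ℝ) * u x) * Rscal n u x

/-- Anomaly functional
`A(φ,u) = ∫ e^{nu} ( (n−2) φ R(u) + 2(n−1) Δ_u φ ) dx`. -/
def anomaly (n : ℕ) (φ u : EuclideanSpace ℝ (Fin n) → ℝ) : ℝ :=
  ∫ x, Real.exp ((n : ℝ) * u x) *
    (((n : ℝ) - 2) * φ x * Rscal n u x + 2 * ((n : ℝ) - 1) * lap n u φ x)

/-- Wess–Zumino functional `Γ_WZ(τ,u) = ∫₀¹ A(−2τ, u − tτ) dt`. -/
def WZ (n : ℕ) (τ u : EuclideanSpace ℝ (Fin n) → ℝ) : ℝ :=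
  ∫ t in (0 : ℝ)..1,
    anomaly n (fun y => -2 * τ y) (fun y => u y - t * τ y)

variable {n : ℕ}

lemma pd_smooth {f : EuclideanSpace ℝ (Fin n) → ℝ} (hf : ContDiff ℝ (⊤ : ℕ∞) f) (i : Fin n) :
    ContDiff ℝ (⊤ : ℕ∞) (pd n f i) :=
  (hf.fderiv_right (by simp)).clm_apply contDiff_const

lemma pd_eq_zero {f : EuclideanSpace ℝ (Fin n) → ℝ} (i : Fin n)
    {x : EuclideanSpace ℝ (Fin n)} (hx : x ∉ tsupport f) : pd n f i x = 0 := by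
  have h : f =ᶠ[nhds x] 0 := notMem_tsupport_iff_eventuallyEq.mp hx
  rw [pd, h.fderiv_eq, show (0 : EuclideanSpace ℝ (Fin n) → ℝ) = fun _ => 0 from rfl,
    fderiv_const_apply]
  simp

lemma tsupport_pd_subset {f : EuclideanSpace ℝ (Fin n) → ℝ} (i : Fin n) :
    tsupport (pd n f i) ⊆ tsupport f := by
  apply closure_minimal _ (isClosed_tsupport f)
  intro x hx
  by_contra h
  exact hx (pd_eq_zero i h)

lemma pd_hcs {f : EuclideanSpace ℝ (Fin n) → ℝ} (hf : HasCompactSupport f) (i : Fin n) :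
    HasCompactSupport (pd n f i) :=
  IsCompact.of_isClosed_subset hf (isClosed_tsupport _) (tsupport_pd_subset i)

lemma integral_pd_eq_zero {f : EuclideanSpace ℝ (Fin n) → ℝ}
    (hf : ContDiff ℝ (⊤ : ℕ∞) f) (hcf : HasCompactSupport f) (i : Fin n) :
    ∫ x, pd n f i x = 0 := by
  have hint : Integrable (pd n f i) :=
    ((pd_smooth hf i).continuous).integrable_of_hasCompactSupport (pd_hcs hcf i)
  have h := integral_mul_fderiv_eq_neg_fderiv_mul_of_integrable
      (μ := (volume : Measure (EuclideanSpace ℝ (Fin n))))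
      (f := fun _ : EuclideanSpace ℝ (Fin n) => (1 : ℝ)) (g := f)
      (v := EuclideanSpace.single i 1)
      ?_ ?_ ?_ (fun x _ => differentiableAt_const _) (fun x _ => hf.differentiable (by simp) x)
  · simpa [pd] using h
  · simpa using (integrable_zero _ ℝ (volume : Measure (EuclideanSpace ℝ (Fin n))))
  · simpa [pd] using (hint : Integrable (fun x => pd n f i x))
  · simpa using hf.continuous.integrable_of_hasCompactSupport hcf

lemma pd_g {u τ : EuclideanSpace ℝ (Fin n) → ℝ}
    (hu : ContDiff ℝ (⊤ : ℕ∞) u) (hτ : ContDiff ℝ (⊤ : ℕ∞) τ) (c : ℝ) (i : Fin n)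
    (x : EuclideanSpace ℝ (Fin n)) :
    pd n (fun y => Real.exp (c * (u y - τ y)) * pd n τ i y) i x =
      Real.exp (c * (u x - τ x)) *
        (pd2 n τ i x + c * (pd n u i x - pd n τ i x) * pd n τ i x) := by
  have hDu := ((hu.differentiable (by simp)) x).hasFDerivAt
  have hDτ := ((hτ.differentiable (by simp)) x).hasFDerivAt
  have h1 : HasFDerivAt (fun y => c * (u y - τ y))
      (c • (fderiv ℝ u x - fderiv ℝ τ x)) x := (hDu.sub hDτ).const_mul c
  have h2 := h1.exp
  have h3 := (((pd_smooth hτ i).differentiable (by simp)) x).hasFDerivAt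
  have h4 := h2.fun_mul h3
  rw [pd, h4.fderiv]
  simp only [pd2, pd, ContinuousLinearMap.add_apply, ContinuousLinearMap.smul_apply,
    ContinuousLinearMap.sub_apply, smul_eq_mul]
  ring


lemma pointwise_id {u τ : EuclideanSpace ℝ (Fin n) → ℝ}
    (hu : ContDiff ℝ (⊤ : ℕ∞) u) (hτ : ContDiff ℝ (⊤ : ℕ∞) τ) (x : EuclideanSpace ℝ (Fin n)) :
    Real.exp ((n : ℝ) * (u x - τ x)) * Rscal n (fun y => u y - τ y) x =
      Real.exp ((n : ℝ) * u x) * Real.exp ((2 - (n : ℝ)) * τ x) *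
        (Rscal n u x + ((n : ℝ) - 1) * ((n : ℝ) - 2) * gradSq n u τ x)
      + 2 * ((n : ℝ) - 1) *
        ∑ i, pd n (fun y => Real.exp (((n : ℝ) - 2) * (u y - τ y)) * pd n τ i y) i x := by
  have hDu : Differentiable ℝ u := hu.differentiable (by simp)
  have hDτ : Differentiable ℝ τ := hτ.differentiable (by simp)
  have hpu : ∀ i : Fin n, Differentiable ℝ (pd n u i) :=
    fun i => (pd_smooth hu i).differentiable (by simp)
  have hpτ : ∀ i : Fin n, Differentiable ℝ (pd n τ i) :=
    fun i => (pd_smooth hτ i).differentiable (by simp)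
  have hpd_sub : ∀ i : Fin n, ∀ y, pd n (fun y => u y - τ y) i y = pd n u i y - pd n τ i y := by
    intro i y
    simp only [pd]
    rw [fderiv_fun_sub (hDu y) (hDτ y)]
    simp
  have hpd2_sub : ∀ i : Fin n, pd2 n (fun y => u y - τ y) i x = pd2 n u i x - pd2 n τ i x := by
    intro i
    simp only [pd2]
    have h := funext (hpd_sub i)
    rw [h]
    show fderiv ℝ (fun y => pd n u i y - pd n τ i y) x (EuclideanSpace.single i 1) = _
    rw [fderiv_fun_sub (hpu i x) (hpτ i x)]
    simp [pd]
  -- sum abbreviations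
  set sA := ∑ i, pd2 n u i x with hsA
  set sB := ∑ i, pd2 n τ i x with hsB
  set sa2 := ∑ i, (pd n u i x) ^ 2 with hsa2
  set sb2 := ∑ i, (pd n τ i x) ^ 2 with hsb2
  set sab := ∑ i, pd n u i x * pd n τ i x with hsab
  have h1 : ∑ i, pd2 n (fun y => u y - τ y) i x = sA - sB := by
    simp only [hpd2_sub]
    rw [Finset.sum_sub_distrib]
  have h2 : ∑ i, (pd n (fun y => u y - τ y) i x) ^ 2 = sa2 - 2 * sab + sb2 := by
    have : ∀ i : Fin n, (pd n (fun y => u y - τ y) i x) ^ 2 =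
        (pd n u i x) ^ 2 - 2 * (pd n u i x * pd n τ i x) + (pd n τ i x) ^ 2 := by
      intro i; rw [hpd_sub i x]; ring
    simp only [this]
    rw [Finset.sum_add_distrib, Finset.sum_sub_distrib, ← Finset.mul_sum]
  have h3 : ∑ i, pd n (fun y => Real.exp (((n : ℝ) - 2) * (u y - τ y)) * pd n τ i y) i x =
      Real.exp (((n : ℝ) - 2) * (u x - τ x)) * (sB + ((n : ℝ) - 2) * (sab - sb2)) := by
    have : ∀ i : Fin n, pd n (fun y => Real.exp (((n : ℝ) - 2) * (u y - τ y)) * pd n τ i y) i x =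
        Real.exp (((n : ℝ) - 2) * (u x - τ x)) *
          (pd2 n τ i x + ((n : ℝ) - 2) * (pd n u i x * pd n τ i x - (pd n τ i x) ^ 2)) := by
      intro i; rw [pd_g hu hτ _ i x]; ring
    simp only [this]
    rw [← Finset.mul_sum]
    congr 1
    have expand : ∀ i : Fin n,
        pd2 n τ i x + ((n : ℝ) - 2) * (pd n u i x * pd n τ i x - (pd n τ i x) ^ 2) =
        pd2 n τ i x + (((n : ℝ) - 2) * (pd n u i x * pd n τ i x)
          - ((n : ℝ) - 2) * (pd n τ i x) ^ 2) := by intro i; ring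
    simp only [expand]
    rw [Finset.sum_add_distrib, Finset.sum_sub_distrib, ← Finset.mul_sum, ← Finset.mul_sum]
    ring
  simp only [Rscal, gradSq, h1, h2, h3]
  have f1 : Real.exp ((n : ℝ) * (u x - τ x)) * Real.exp (-2 * (u x - τ x)) =
      Real.exp (((n : ℝ) - 2) * (u x - τ x)) := by
    rw [← Real.exp_add]; congr 1; ring
  have f2 : Real.exp ((n : ℝ) * u x) * Real.exp ((2 - (n : ℝ)) * τ x) * Real.exp (-2 * u x) =
      Real.exp (((n : ℝ) - 2) * (u x - τ x)) := by
    rw [← Real.exp_add, ← Real.exp_add]; congr 1; ring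
  linear_combination
    (-2 * ((n : ℝ) - 1) * (sA - sB) - ((n : ℝ) - 1) * ((n : ℝ) - 2) * (sa2 - 2 * sab + sb2)) * f1
    - (-2 * ((n : ℝ) - 1) * sA - ((n : ℝ) - 1) * ((n : ℝ) - 2) * sa2
        + ((n : ℝ) - 1) * ((n : ℝ) - 2) * sb2) * f2

/-- The Einstein–Hilbert action of the Weyl-rescaled metric `σ^{−2} g_u`
(with dilaton `σ = e^τ`) equals the Zumino–Deser Weyl-invariant functional. -/
theorem EH_of_rescaled_metric_eq_zumino_deser
    (n : ℕ) (hn : 2 ≤ n)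
    (u τ : EuclideanSpace ℝ (Fin n) → ℝ)
    (hu : ContDiff ℝ (⊤ : ℕ∞) u) (hτ : ContDiff ℝ (⊤ : ℕ∞) τ)
    (hcu : HasCompactSupport u) (hcτ : HasCompactSupport τ) :
    SEH n (fun y => u y - τ y) =
      ∫ x, Real.exp ((n : ℝ) * u x) * Real.exp ((2 - (n : ℝ)) * τ x) *
        (Rscal n u x + ((n : ℝ) - 1) * ((n : ℝ) - 2) * gradSq n u τ x) := by
  -- the flux functions
  have hgsm : ∀ i : Fin n,
      ContDiff ℝ (⊤ : ℕ∞) (fun y => Real.exp (((n : ℝ) - 2) * (u y - τ y)) * pd n τ i y) :=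
    fun i => ((contDiff_const.mul (hu.sub hτ)).exp).mul (pd_smooth hτ i)
  have hgcs : ∀ i : Fin n,
      HasCompactSupport (fun y => Real.exp (((n : ℝ) - 2) * (u y - τ y)) * pd n τ i y) := by
    intro i
    apply HasCompactSupport.intro (hcτ : IsCompact (tsupport τ))
    intro y hy
    rw [pd_eq_zero i hy, mul_zero]
  -- integrability of the divergence terms
  have hDint : ∀ i : Fin n, Integrable
      (fun x => pd n (fun y => Real.exp (((n : ℝ) - 2) * (u y - τ y)) * pd n τ i y) i x) :=
    fun i => ((pd_smooth (hgsm i) i).continuous).integrable_of_hasCompactSupport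
      (pd_hcs (hgcs i) i)
  -- the RHS integrand: continuity
  have hpdc : ∀ (f : EuclideanSpace ℝ (Fin n) → ℝ), ContDiff ℝ (⊤ : ℕ∞) f → ∀ i : Fin n,
      Continuous (pd n f i) := fun f hf i => (pd_smooth hf i).continuous
  have hGcont : Continuous (fun x => Real.exp ((n : ℝ) * u x) *
      Real.exp ((2 - (n : ℝ)) * τ x) *
      (Rscal n u x + ((n : ℝ) - 1) * ((n : ℝ) - 2) * gradSq n u τ x)) := by
    unfold Rscal gradSq pd2
    apply Continuous.mul
    · exact (Real.continuous_exp.comp (continuous_const.mul hu.continuous)).mul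
        (Real.continuous_exp.comp (continuous_const.mul hτ.continuous))
    · apply Continuous.add
      · exact (Real.continuous_exp.comp (continuous_const.mul hu.continuous)).mul
          ((continuous_const.mul (continuous_finset_sum _ fun i _ =>
            hpdc _ (pd_smooth hu i) i)).sub
           (continuous_const.mul (continuous_finset_sum _ fun i _ =>
            (hpdc _ hu i).pow 2)))
      · exact continuous_const.mul ((Real.continuous_exp.comp
          (continuous_const.mul hu.continuous)).mul
          (continuous_finset_sum _ fun i _ => (hpdc _ hτ i).pow 2))
  -- the RHS integrand: compact support
  have hGcs : HasCompactSupport (fun x => Real.exp ((n : ℝ) * u x) *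
      Real.exp ((2 - (n : ℝ)) * τ x) *
      (Rscal n u x + ((n : ℝ) - 1) * ((n : ℝ) - 2) * gradSq n u τ x)) := by
    apply HasCompactSupport.intro
      ((hcu.union hcτ) : IsCompact (tsupport u ∪ tsupport τ))
    intro x hx
    have hxu : x ∉ tsupport u := fun h => hx (Set.mem_union_left _ h)
    have hxτ : x ∉ tsupport τ := fun h => hx (Set.mem_union_right _ h)
    have h1 : ∀ i : Fin n, pd n u i x = 0 := fun i => pd_eq_zero i hxu
    have h2 : ∀ i : Fin n, pd2 n u i x = 0 := fun i =>
      pd_eq_zero i (fun h => hxu (tsupport_pd_subset i h))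
    have h3 : ∀ i : Fin n, pd n τ i x = 0 := fun i => pd_eq_zero i hxτ
    simp [Rscal, gradSq, h1, h2, h3]
  have hGint : Integrable (fun x => Real.exp ((n : ℝ) * u x) *
      Real.exp ((2 - (n : ℝ)) * τ x) *
      (Rscal n u x + ((n : ℝ) - 1) * ((n : ℝ) - 2) * gradSq n u τ x)) :=
    hGcont.integrable_of_hasCompactSupport hGcs
  have hHint : Integrable (fun x => 2 * ((n : ℝ) - 1) *
      ∑ i, pd n (fun y => Real.exp (((n : ℝ) - 2) * (u y - τ y)) * pd n τ i y) i x) :=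
    (integrable_finset_sum _ fun i _ => hDint i).const_mul _
  rw [SEH]
  calc (∫ x, Real.exp ((n : ℝ) * (fun y => u y - τ y) x) * Rscal n (fun y => u y - τ y) x)
      = ∫ x, (Real.exp ((n : ℝ) * u x) * Real.exp ((2 - (n : ℝ)) * τ x) *
          (Rscal n u x + ((n : ℝ) - 1) * ((n : ℝ) - 2) * gradSq n u τ x)
        + 2 * ((n : ℝ) - 1) *
          ∑ i, pd n (fun y => Real.exp (((n : ℝ) - 2) * (u y - τ y)) * pd n τ i y) i x) := by
        congr 1
        funext x
        exact pointwise_id hu hτ x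
    _ = (∫ x, Real.exp ((n : ℝ) * u x) * Real.exp ((2 - (n : ℝ)) * τ x) *
          (Rscal n u x + ((n : ℝ) - 1) * ((n : ℝ) - 2) * gradSq n u τ x))
        + ∫ x, 2 * ((n : ℝ) - 1) *
          ∑ i, pd n (fun y => Real.exp (((n : ℝ) - 2) * (u y - τ y)) * pd n τ i y) i x :=
        integral_add hGint hHint
    _ = ∫ x, Real.exp ((n : ℝ) * u x) * Real.exp ((2 - (n : ℝ)) * τ x) *
          (Rscal n u x + ((n : ℝ) - 1) * ((n : ℝ) - 2) * gradSq n u τ x) := by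
        rw [integral_const_mul, integral_finset_sum _ fun i _ => hDint i]
        have : ∀ i : Fin n, (∫ x, pd n (fun y =>
            Real.exp (((n : ℝ) - 2) * (u y - τ y)) * pd n τ i y) i x) = 0 :=
          fun i => integral_pd_eq_zero (hgsm i) (hgcs i) i
        simp [this]
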